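/- Let c be a generic linear list, f its piecewise linear map, and i an interior local minimum of c. Let s < c_i ≤ t be real numbers such that no item value other than c_i lies in the closed interval [s, t]. Then the number of connected components of f^{-1}((−∞, t]) equals the number of connected components of f^{-1}((−∞, s]) plus one. -/

import Mathlib

/-- The piecewise linear map determined by the list `c` (on the domain `[1,m]`). -/
noncomputable def plMap (c : ℕ → ℝ) (x : ℝ) : ℝ :=
  c (Int.floor x).toNat +
    (x - (Int.floor x : ℝ)) * (c ((Int.floor x).toNat + 1) - c (Int.floor x).toNat)

/-- The set of points of the domain `[1,m]` with values in `[A,B]`. -/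
def levelBand (m : ℕ) (c : ℕ → ℝ) (A B : ℝ) : Set ℝ :=
  {x : ℝ | x ∈ Set.Icc (1 : ℝ) (m : ℝ) ∧ plMap c x ∈ Set.Icc A B}

/-- The sublevel set of the map at `s`, within the domain `[1,m]`. -/
def sublevel (m : ℕ) (c : ℕ → ℝ) (s : ℝ) : Set ℝ :=
  {x : ℝ | x ∈ Set.Icc (1 : ℝ) (m : ℝ) ∧ plMap c x ≤ s}

/-- The support of the frame spanned by the items `a` and `b`: the connected component
of `f⁻¹([f a, f b])` (within the domain) containing `a`. -/
def frameSupport (m : ℕ) (c : ℕ → ℝ) (a b : ℕ) : Set ℝ :=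
  connectedComponentIn (levelBand m c (c a) (c b)) (a : ℝ)

/-- `W(a,b)` is a triple-panel window of the piecewise linear map of `c`:
`a` and `b` are items with `c a < c b` lying in a common connected component `[x,y]`
of `f⁻¹([c a, c b])`, and the value at the end of the support away from the mirror
equals `c a`. -/
def IsTPW (m : ℕ) (c : ℕ → ℝ) (a b : ℕ) : Prop :=
  1 ≤ a ∧ a ≤ m ∧ 1 ≤ b ∧ b ≤ m ∧ c a < c b ∧
  (b : ℝ) ∈ frameSupport m c a b ∧
  (if a < b then plMap c (sSup (frameSupport m c a b)) = c a
   else plMap c (sInf (frameSupport m c a b)) = c a)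

/-- `i` is an interior local minimum of the list `c`. -/
def IsLocMin (m : ℕ) (c : ℕ → ℝ) (i : ℕ) : Prop :=
  1 < i ∧ i < m ∧ c i < c (i - 1) ∧ c i < c (i + 1)

/-- `i` is an interior local maximum of the list `c`. -/
def IsLocMax (m : ℕ) (c : ℕ → ℝ) (i : ℕ) : Prop :=
  1 < i ∧ i < m ∧ c (i - 1) < c i ∧ c (i + 1) < c i

/-- `i` is a critical item that is a leaf: an endpoint or an interior local minimum. -/
def IsCritLeaf (m : ℕ) (c : ℕ → ℝ) (i : ℕ) : Prop :=
  i = 1 ∨ i = m ∨ IsLocMin m c i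

/-- `i` is a critical item of the list `c`. -/
def IsCritItem (m : ℕ) (c : ℕ → ℝ) (i : ℕ) : Prop :=
  IsCritLeaf m c i ∨ IsLocMax m c i

/-- The set of connected components of `S`. -/
def componentsOf (S : Set ℝ) : Set (Set ℝ) :=
  {C | ∃ x ∈ S, C = connectedComponentIn S x}

/-!
Raising the level from `s` to `t` passes exactly one item value, `c i`. Every point of a
sublevel set is joined to an item by walking downhill, so every component of the `t`-sublevel
set other than the one of `i` contains an item of value at most `s`. Such a component meets the
`s`-sublevel set in a single component: on an interval, `f` attains its maximum at an end or at
an item, and an item with value in `[s, t]` would be `i`, whose component in the `t`-sublevel set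
lies between `i - 1` and `i + 1`, where `f ≥ c i > s`. For the same reason the component of `i`
misses the `s`-sublevel set, so it is the one new component.
-/

section LineComponents

variable {α : Type*} [ConditionallyCompleteLinearOrder α] [TopologicalSpace α] [OrderTopology α]
  [DenselyOrdered α]

theorem mem_connectedComponentIn_iff_uIcc_subset {S : Set α} {x y : α} (hx : x ∈ S) :
    y ∈ connectedComponentIn S x ↔ Set.uIcc x y ⊆ S :=
  ⟨fun hy => (isPreconnected_connectedComponentIn.ordConnected.uIcc_subset
      (mem_connectedComponentIn hx) hy).trans (connectedComponentIn_subset S x),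
    fun h => isPreconnected_uIcc.subset_connectedComponentIn Set.left_mem_uIcc h
      Set.right_mem_uIcc⟩

end LineComponents

theorem ncard_componentsOf_eq_ncard_add_one {S T : Set ℝ} (hST : S ⊆ T)
    (hfin : (componentsOf T).Finite) {x₀ : ℝ} (hx₀ : x₀ ∈ T)
    (hdisj : Disjoint (connectedComponentIn T x₀) S)
    (hcover : ∀ x ∈ T, x ∈ connectedComponentIn T x₀ ∨ ∃ y ∈ S, x ∈ connectedComponentIn T y)
    (hsep : ∀ y ∈ S, connectedComponentIn T y ∩ S ⊆ connectedComponentIn S y) :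
    (componentsOf T).ncard = (componentsOf S).ncard + 1 := by
  have htrace : ∀ y ∈ S, connectedComponentIn T y ∩ S = connectedComponentIn S y := fun y hy =>
    (hsep y hy).antisymm
      (Set.subset_inter (connectedComponentIn_mono y hST) (connectedComponentIn_subset S y))
  have hrest : componentsOf T \ {connectedComponentIn T x₀} =
      (connectedComponentIn T ·) '' S := by
    ext D
    constructor
    · rintro ⟨⟨x, hx, rfl⟩, hne⟩
      rcases hcover x hx with hx₀x | ⟨y, hy, hxy⟩
      · exact absurd (connectedComponentIn_eq hx₀x).symm hne
      · exact ⟨y, hy, connectedComponentIn_eq hxy⟩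
    · rintro ⟨y, hy, rfl⟩
      refine ⟨⟨y, hST hy, rfl⟩, fun h => Set.disjoint_left.1 hdisj ?_ hy⟩
      exact h ▸ mem_connectedComponentIn (hST hy)
  have hinj : Set.InjOn (· ∩ S) (componentsOf T \ {connectedComponentIn T x₀}) := by
    rw [hrest]
    rintro _ ⟨y, hy, rfl⟩ _ ⟨y', hy', rfl⟩ h
    have : y ∈ connectedComponentIn T y' ∩ S := by
      simp only at h
      exact h ▸ ⟨mem_connectedComponentIn (hST hy), hy⟩
    exact (connectedComponentIn_eq this.1).symm
  have himage : (· ∩ S) '' (componentsOf T \ {connectedComponentIn T x₀}) = componentsOf S := by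
    rw [hrest, Set.image_image]
    ext C
    constructor <;> rintro ⟨y, hy, rfl⟩ <;> exact ⟨y, hy, htrace y hy⟩
  have hC₀ : connectedComponentIn T x₀ ∈ componentsOf T := ⟨x₀, hx₀, rfl⟩
  rw [← himage, hinj.ncard_image, Set.ncard_sdiff_singleton_add_one hC₀ hfin]

section PiecewiseLinear

variable {c : ℕ → ℝ} {m : ℕ}

theorem plMap_natCast (c : ℕ → ℝ) (n : ℕ) : plMap c n = c n := by
  simp [plMap]

theorem plMap_neg (c : ℕ → ℝ) (x : ℝ) : plMap (fun n => -c n) x = -plMap c x := by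
  simp only [plMap]
  ring

theorem plMap_eq_of_mem_Icc {k : ℕ} {x : ℝ} (hx : x ∈ Set.Icc (k : ℝ) (k + 1)) :
    plMap c x = c k + (x - k) * (c (k + 1) - c k) := by
  rcases hx.2.eq_or_lt with rfl | hlt
  · rw [show (k : ℝ) + 1 = ((k + 1 : ℕ) : ℝ) by push_cast; ring, plMap_natCast]
    push_cast
    ring
  · have hfloor : ⌊x⌋ = (k : ℤ) := by
      rw [Int.floor_eq_iff]
      exact ⟨mod_cast hx.1, mod_cast hlt⟩
    simp [plMap, hfloor]

theorem monotoneOn_plMap {k : ℕ} (hc : c k ≤ c (k + 1)) :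
    MonotoneOn (plMap c) (Set.Icc (k : ℝ) (k + 1)) := by
  intro x hx y hy hxy
  rw [plMap_eq_of_mem_Icc hx, plMap_eq_of_mem_Icc hy]
  nlinarith

theorem antitoneOn_plMap {k : ℕ} (hc : c (k + 1) ≤ c k) :
    AntitoneOn (plMap c) (Set.Icc (k : ℝ) (k + 1)) := by
  intro x hx y hy hxy
  rw [plMap_eq_of_mem_Icc hx, plMap_eq_of_mem_Icc hy]
  nlinarith

theorem exists_item_forall_uIcc_plMap_le {z : ℝ} (hz : z ∈ Set.Icc (1 : ℝ) m) :
    ∃ j : ℕ, 1 ≤ j ∧ j ≤ m ∧ ∀ w ∈ Set.uIcc (j : ℝ) z, plMap c w ≤ plMap c z := by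
  rcases hz.2.eq_or_lt with rfl | hzm
  · refine ⟨m, mod_cast hz.1, le_rfl, fun w hw => ?_⟩
    rw [Set.uIcc_self, Set.mem_singleton_iff] at hw
    rw [hw]
  have hz0 : (0 : ℝ) ≤ z := zero_le_one.trans hz.1
  set k := ⌊z⌋₊
  have hk1 : 1 ≤ k := Nat.le_floor (by exact_mod_cast hz.1)
  have hkm : k < m := (Nat.floor_lt hz0).2 hzm
  have hkz : (k : ℝ) ≤ z := Nat.floor_le hz0
  have hzk : z ≤ k + 1 := (Nat.lt_floor_add_one z).le
  rcases le_total (c k) (c (k + 1)) with hc | hc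
  · refine ⟨k, hk1, hkm.le, fun w hw => ?_⟩
    rw [Set.uIcc_of_le hkz] at hw
    exact monotoneOn_plMap hc ⟨hw.1, hw.2.trans hzk⟩ ⟨hkz, hzk⟩ hw.2
  · refine ⟨k + 1, by omega, hkm, fun w hw => ?_⟩
    push_cast at hw
    rw [Set.uIcc_of_ge hzk] at hw
    exact antitoneOn_plMap hc ⟨hkz, hzk⟩ ⟨hkz.trans hw.1, hw.2⟩ hw.1

theorem exists_item_forall_uIcc_le_plMap {z : ℝ} (hz : z ∈ Set.Icc (1 : ℝ) m) :
    ∃ j : ℕ, 1 ≤ j ∧ j ≤ m ∧ ∀ w ∈ Set.uIcc (j : ℝ) z, plMap c z ≤ plMap c w := by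
  obtain ⟨j, hj1, hjm, hj⟩ := exists_item_forall_uIcc_plMap_le (c := fun n => -c n) hz
  exact ⟨j, hj1, hjm, fun w hw => by simpa [plMap_neg] using hj w hw⟩

theorem exists_item_uIcc_subset_sublevel {s x : ℝ} (hx : x ∈ sublevel m c s) :
    ∃ j : ℕ, 1 ≤ j ∧ j ≤ m ∧ Set.uIcc (j : ℝ) x ⊆ sublevel m c s := by
  obtain ⟨j, hj1, hjm, hj⟩ := exists_item_forall_uIcc_plMap_le (c := c) hx.1
  have hjI : (j : ℝ) ∈ Set.Icc (1 : ℝ) m := ⟨mod_cast hj1, mod_cast hjm⟩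
  exact ⟨j, hj1, hjm, fun w hw =>
    ⟨Set.uIcc_subset_Icc hjI hx.1 hw, (hj w hw).trans hx.2⟩⟩

theorem finite_componentsOf_sublevel (s : ℝ) : (componentsOf (sublevel m c s)).Finite := by
  refine ((Set.finite_Icc 1 m).image
    (fun k : ℕ => connectedComponentIn (sublevel m c s) k)).subset ?_
  rintro _ ⟨x, hx, rfl⟩
  obtain ⟨j, hj1, hjm, hj⟩ := exists_item_uIcc_subset_sublevel hx
  refine ⟨j, ⟨hj1, hjm⟩, (connectedComponentIn_eq ?_).symm⟩
  rw [mem_connectedComponentIn_iff_uIcc_subset hx, Set.uIcc_comm]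
  exact hj

end PiecewiseLinear

section LocalMinimum

variable {m : ℕ} {c : ℕ → ℝ} {i : ℕ} {s t : ℝ}

theorem lt_neighbours_of_gap (hi : IsLocMin m c i) (hs : s < c i)
    (hgap : ∀ k, 1 ≤ k → k ≤ m → k ≠ i → c k ∉ Set.Icc s t) :
    t < c (i - 1) ∧ t < c (i + 1) := by
  obtain ⟨hi1, him, hl, hr⟩ := hi
  constructor
  · by_contra h
    exact hgap (i - 1) (by omega) (by omega) (by omega) ⟨by linarith, not_lt.1 h⟩
  · by_contra h
    exact hgap (i + 1) (by omega) (by omega) (by omega) ⟨by linarith, not_lt.1 h⟩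

theorem le_plMap_of_uIcc_subset_sublevel (hi : IsLocMin m c i)
    (hl : t < c (i - 1)) (hr : t < c (i + 1)) {y : ℝ}
    (hy : Set.uIcc (i : ℝ) y ⊆ sublevel m c t) : c i ≤ plMap c y := by
  obtain ⟨hi1, -, hcl, hcr⟩ := hi
  obtain ⟨k, rfl⟩ : ∃ k, i = k + 1 := ⟨i - 1, by omega⟩
  simp only [Nat.add_sub_cancel] at hl hcl
  have hitem : ∀ n : ℕ, (n : ℝ) ∈ Set.uIcc ((k + 1 : ℕ) : ℝ) y → c n ≤ t := fun n hn => by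
    simpa [plMap_natCast] using (hy hn).2
  rw [← plMap_natCast c (k + 1)]
  push_cast at hitem ⊢
  rcases le_total y (k + 1) with hyi | hiy
  · have hky : (k : ℝ) < y := by
      by_contra! h
      exact hl.not_ge (hitem k (by rw [Set.uIcc_of_ge hyi]; constructor <;> linarith))
    exact antitoneOn_plMap hcl.le ⟨hky.le, hyi⟩ ⟨by linarith, le_rfl⟩ hyi
  · have hyk : y < (k + 1 : ℕ) + 1 := by
      by_contra! h
      exact hr.not_ge (hitem (k + 1 + 1)
        (by rw [Set.uIcc_of_le hiy]; push_cast at h ⊢; constructor <;> linarith))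
    push_cast at hyk
    exact monotoneOn_plMap (k := k + 1) hcr.le (by push_cast; exact ⟨le_rfl, by linarith⟩)
      (by push_cast; exact ⟨hiy, hyk.le⟩) hiy

theorem uIcc_subset_sublevel_of_subset_sublevel (hi : IsLocMin m c i) (hs : s < c i)
    (hgap : ∀ k, 1 ≤ k → k ≤ m → k ≠ i → c k ∉ Set.Icc s t)
    {x₁ x₂ : ℝ} (hx₁ : x₁ ∈ sublevel m c s) (hx₂ : x₂ ∈ sublevel m c s)
    (hT : Set.uIcc x₁ x₂ ⊆ sublevel m c t) : Set.uIcc x₁ x₂ ⊆ sublevel m c s := by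
  wlog h₁₂ : x₁ ≤ x₂ generalizing x₁ x₂
  · rw [Set.uIcc_comm] at hT ⊢
    exact this hx₂ hx₁ hT (le_of_not_ge h₁₂)
  obtain ⟨hl, hr⟩ := lt_neighbours_of_gap hi hs hgap
  rw [Set.uIcc_of_le h₁₂] at hT ⊢
  intro z hz
  refine ⟨(hT hz).1, not_lt.1 fun hzs => ?_⟩
  obtain ⟨j, hj1, hjm, hj⟩ := exists_item_forall_uIcc_le_plMap (c := c) (hT hz).1
  rcases lt_or_ge (j : ℝ) x₁ with hjx | hxj
  · linarith [hx₁.2, hj x₁ (Set.mem_uIcc.2 (Or.inl ⟨hjx.le, hz.1⟩))]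
  rcases lt_or_ge x₂ (j : ℝ) with hjx' | hxj'
  · linarith [hx₂.2, hj x₂ (Set.mem_uIcc.2 (Or.inr ⟨hz.2, hjx'.le⟩))]
  have hjz : plMap c z ≤ c j := by simpa [plMap_natCast] using hj j Set.left_mem_uIcc
  have hjt : c j ≤ t := by simpa [plMap_natCast] using (hT ⟨hxj, hxj'⟩).2
  obtain rfl : j = i := by
    by_contra hne
    exact hgap j hj1 hjm hne ⟨by linarith, hjt⟩
  have := le_plMap_of_uIcc_subset_sublevel hi hl hr (y := x₁)
    (fun w hw => hT (Set.uIcc_subset_Icc ⟨hxj, hxj'⟩ ⟨le_rfl, h₁₂⟩ hw))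
  linarith [hx₁.2]

theorem mem_connectedComponentIn_or_exists_of_gap
    (hgap : ∀ k, 1 ≤ k → k ≤ m → k ≠ i → c k ∉ Set.Icc s t) {x : ℝ} (hx : x ∈ sublevel m c t) :
    x ∈ connectedComponentIn (sublevel m c t) i ∨
      ∃ y ∈ sublevel m c s, x ∈ connectedComponentIn (sublevel m c t) y := by
  obtain ⟨j, hj1, hjm, hj⟩ := exists_item_uIcc_subset_sublevel hx
  have hjT := hj Set.left_mem_uIcc
  have hxj : x ∈ connectedComponentIn (sublevel m c t) j :=
    (mem_connectedComponentIn_iff_uIcc_subset hjT).2 hj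
  rcases le_or_gt (c j) s with hjs | hjs
  · exact Or.inr ⟨j, ⟨hjT.1, by rwa [plMap_natCast]⟩, hxj⟩
  · obtain rfl : j = i := by
      by_contra hne
      exact hgap j hj1 hjm hne ⟨hjs.le, by simpa [plMap_natCast] using hjT.2⟩
    exact Or.inl hxj

end LocalMinimum

theorem statement13_general (m : ℕ) (c : ℕ → ℝ)
    (i : ℕ) (hi : IsLocMin m c i)
    (s t : ℝ) (hs : s < c i) (ht : c i ≤ t)
    (hgap : ∀ k, 1 ≤ k → k ≤ m → k ≠ i → c k ∉ Set.Icc s t) :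
    (componentsOf (sublevel m c t)).ncard = (componentsOf (sublevel m c s)).ncard + 1 := by
  obtain ⟨hl, hr⟩ := lt_neighbours_of_gap hi hs hgap
  have hiT : (i : ℝ) ∈ sublevel m c t :=
    ⟨⟨mod_cast hi.1.le, mod_cast hi.2.1.le⟩, by rwa [plMap_natCast]⟩
  have hST : sublevel m c s ⊆ sublevel m c t := fun x hx => ⟨hx.1, hx.2.trans (hs.trans_le ht).le⟩
  refine ncard_componentsOf_eq_ncard_add_one hST (finite_componentsOf_sublevel t) hiT ?_ ?_ ?_
  · refine Set.disjoint_left.2 fun y hy hyS => hyS.2.not_gt (hs.trans_le ?_)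
    exact le_plMap_of_uIcc_subset_sublevel hi hl hr
      ((mem_connectedComponentIn_iff_uIcc_subset hiT).1 hy)
  · exact fun x hx => mem_connectedComponentIn_or_exists_of_gap hgap hx
  · rintro y hy z ⟨hz, hzS⟩
    rw [mem_connectedComponentIn_iff_uIcc_subset (hST hy)] at hz
    rw [mem_connectedComponentIn_iff_uIcc_subset hy]
    exact uIcc_subset_sublevel_of_subset_sublevel hi hs hgap hy hzS hz

/-- Passing a value of an interior local minimum increases the number
of connected components of the sublevel set by one. -/
theorem statement13 (m : ℕ) (hm : 2 ≤ m) (c : ℕ → ℝ)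
    (hgen : Set.InjOn c (Set.Icc 1 m))
    (i : ℕ) (hi : IsLocMin m c i)
    (s t : ℝ) (hs : s < c i) (ht : c i ≤ t)
    (hgap : ∀ k, 1 ≤ k → k ≤ m → k ≠ i → c k ∉ Set.Icc s t) :
    (componentsOf (sublevel m c t)).ncard = (componentsOf (sublevel m c s)).ncard + 1 :=
  statement13_general m c i hi s t hs ht hgap
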